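/- arXiv:2007.03470 — 2 statements merged into one kernel-verified Lean document; each statement's English description precedes it below -/
import Mathlib

section
/- Let V_i, V_j, V_{ij}, V_{ji} ∈ ℂ with V_i ≠ 0 and V_j ≠ 0, and let 0 < kmin ≤ kmax be reals. There exists k ∈ ℝ with kmin ≤ k ≤ kmax, V_{ij} = √k·V_i and V_{ji} = √k·V_j, if and only if: (a) kmin·|V_i|² ≤ |V_{ij}|² ≤ kmax·|V_i|², (b) kmin·|V_j|² ≤ |V_{ji}|² ≤ kmax·|V_j|², (c) V_{ij}·V_j* = V_i·V_{ji}*, (d) Im(V_i·V_{ij}*) = 0 and Im(V_j·V_{ji}*) = 0, and (e) Re(V_i·V_{ij}*) ≥ 0 and Re(V_j·V_{ji}*) ≥ 0. -/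
/-! Conditions (d) and (e) say that `Vij` lies on the closed ray through `Vi`, i.e. `Vij = r * Vi`
with `r ≥ 0`, and likewise `Vji = s * Vj`; condition (c) then reads `r = s`, and (a), (b) say
`kmin ≤ r ^ 2 ≤ kmax`, so `k = r ^ 2` is the tap ratio. -/

open Complex ComplexConjugate

lemma exists_sqrt_iff_exists_sq {a b : ℝ} (ha : 0 ≤ a) (P : ℝ → Prop) :
    (∃ k : ℝ, a ≤ k ∧ k ≤ b ∧ P (Real.sqrt k)) ↔ ∃ r : ℝ, 0 ≤ r ∧ a ≤ r ^ 2 ∧ r ^ 2 ≤ b ∧ P r := by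
  constructor
  · rintro ⟨k, hak, hkb, hP⟩
    have hk : Real.sqrt k ^ 2 = k := Real.sq_sqrt (ha.trans hak)
    exact ⟨Real.sqrt k, Real.sqrt_nonneg k, by rwa [hk], by rwa [hk], hP⟩
  · rintro ⟨r, hr, har, hrb, hP⟩
    exact ⟨r ^ 2, har, hrb, (Real.sqrt_sq hr).symm ▸ hP⟩

lemma norm_ofReal_mul_sq (r : ℝ) (z : ℂ) : ‖(r : ℂ) * z‖ ^ 2 = r ^ 2 * ‖z‖ ^ 2 := by
  rw [norm_mul, mul_pow, norm_real, Real.norm_eq_abs, sq_abs]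

lemma mul_le_norm_ofReal_mul_sq_iff {z : ℂ} (hz : z ≠ 0) (c r : ℝ) :
    c * ‖z‖ ^ 2 ≤ ‖(r : ℂ) * z‖ ^ 2 ↔ c ≤ r ^ 2 := by
  rw [norm_ofReal_mul_sq]
  exact mul_le_mul_iff_of_pos_right (by positivity)

lemma norm_ofReal_mul_sq_le_mul_iff {z : ℂ} (hz : z ≠ 0) (c r : ℝ) :
    ‖(r : ℂ) * z‖ ^ 2 ≤ c * ‖z‖ ^ 2 ↔ r ^ 2 ≤ c := by
  rw [norm_ofReal_mul_sq]
  exact mul_le_mul_iff_of_pos_right (by positivity)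

lemma mul_conj_ofReal_mul (r : ℝ) (z : ℂ) : z * conj ((r : ℂ) * z) = ((r * normSq z : ℝ) : ℂ) := by
  rw [map_mul, conj_ofReal, ofReal_mul, ← mul_conj]
  ring

lemma exists_nonneg_ofReal_mul_iff {z : ℂ} (hz : z ≠ 0) (w : ℂ) :
    (∃ r : ℝ, 0 ≤ r ∧ w = r * z) ↔ (z * conj w).im = 0 ∧ 0 ≤ (z * conj w).re := by
  constructor
  · rintro ⟨r, hr, rfl⟩
    rw [mul_conj_ofReal_mul, ofReal_im, ofReal_re]
    exact ⟨rfl, mul_nonneg hr (normSq_nonneg z)⟩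
  · rintro ⟨him, hre⟩
    have hreal : conj (z * conj w) = ((z * conj w).re : ℂ) := by
      have hself := conj_eq_iff_im.mpr him
      rw [hself, conj_eq_iff_re.mp hself]
    refine ⟨(z * conj w).re / normSq z, div_nonneg hre (normSq_nonneg z), ?_⟩
    have hnormSq : (normSq z : ℂ) ≠ 0 := by exact_mod_cast normSq_pos.mpr hz |>.ne'
    rw [ofReal_div, div_mul_eq_mul_div, eq_div_iff hnormSq, ← hreal, ← mul_conj]
    simp only [map_mul, conj_conj]
    ring

lemma ofReal_mul_mul_conj_eq_iff {z₁ z₂ : ℂ} (h₁ : z₁ ≠ 0) (h₂ : z₂ ≠ 0) (r s : ℝ) :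
    (r : ℂ) * z₁ * conj z₂ = z₁ * conj ((s : ℂ) * z₂) ↔ r = s := by
  have hne : z₁ * conj z₂ ≠ 0 := mul_ne_zero h₁ ((map_ne_zero _).mpr h₂)
  rw [map_mul, conj_ofReal, ← ofReal_inj]
  constructor
  · intro h
    exact mul_right_cancel₀ hne (by linear_combination h)
  · intro h
    linear_combination h * (z₁ * conj z₂)

theorem prop1_tap_ratio_iff_general
    (Vi Vj Vij Vji : ℂ) (hVi : Vi ≠ 0) (hVj : Vj ≠ 0)
    (kmin kmax : ℝ) (hkmin : 0 < kmin) :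
    (∃ k : ℝ, kmin ≤ k ∧ k ≤ kmax ∧
        Vij = (Real.sqrt k : ℂ) * Vi ∧ Vji = (Real.sqrt k : ℂ) * Vj)
    ↔ (kmin * ‖Vi‖ ^ 2 ≤ ‖Vij‖ ^ 2 ∧
        ‖Vij‖ ^ 2 ≤ kmax * ‖Vi‖ ^ 2 ∧
        kmin * ‖Vj‖ ^ 2 ≤ ‖Vji‖ ^ 2 ∧
        ‖Vji‖ ^ 2 ≤ kmax * ‖Vj‖ ^ 2 ∧
        Vij * starRingEnd ℂ Vj = Vi * starRingEnd ℂ Vji ∧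
        (Vi * starRingEnd ℂ Vij).im = 0 ∧
        (Vj * starRingEnd ℂ Vji).im = 0 ∧
        0 ≤ (Vi * starRingEnd ℂ Vij).re ∧
        0 ≤ (Vj * starRingEnd ℂ Vji).re) := by
  refine (exists_sqrt_iff_exists_sq hkmin.le
    (fun r : ℝ => Vij = (r : ℂ) * Vi ∧ Vji = (r : ℂ) * Vj)).trans ⟨?_, ?_⟩
  · rintro ⟨r, hr, hlo, hhi, rfl, rfl⟩
    obtain ⟨him_i, hre_i⟩ := (exists_nonneg_ofReal_mul_iff hVi _).mp ⟨r, hr, rfl⟩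
    obtain ⟨him_j, hre_j⟩ := (exists_nonneg_ofReal_mul_iff hVj _).mp ⟨r, hr, rfl⟩
    exact ⟨(mul_le_norm_ofReal_mul_sq_iff hVi _ _).mpr hlo,
      (norm_ofReal_mul_sq_le_mul_iff hVi _ _).mpr hhi,
      (mul_le_norm_ofReal_mul_sq_iff hVj _ _).mpr hlo,
      (norm_ofReal_mul_sq_le_mul_iff hVj _ _).mpr hhi,
      (ofReal_mul_mul_conj_eq_iff hVi hVj r r).mpr rfl, him_i, him_j, hre_i, hre_j⟩
  · rintro ⟨hlo, hhi, -, -, hcoupling, him_i, him_j, hre_i, hre_j⟩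
    obtain ⟨r, hr, rfl⟩ := (exists_nonneg_ofReal_mul_iff hVi Vij).mpr ⟨him_i, hre_i⟩
    obtain ⟨s, -, rfl⟩ := (exists_nonneg_ofReal_mul_iff hVj Vji).mpr ⟨him_j, hre_j⟩
    obtain rfl := (ofReal_mul_mul_conj_eq_iff hVi hVj r s).mp hcoupling
    exact ⟨r, hr, (mul_le_norm_ofReal_mul_sq_iff hVi _ _).mp hlo,
      (norm_ofReal_mul_sq_le_mul_iff hVi _ _).mp hhi, rfl, rfl⟩

theorem prop1_tap_ratio_iff
    (Vi Vj Vij Vji : ℂ) (hVi : Vi ≠ 0) (hVj : Vj ≠ 0)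
    (kmin kmax : ℝ) (hkmin : 0 < kmin) (hk : kmin ≤ kmax) :
    (∃ k : ℝ, kmin ≤ k ∧ k ≤ kmax ∧
        Vij = (Real.sqrt k : ℂ) * Vi ∧ Vji = (Real.sqrt k : ℂ) * Vj)
    ↔ (kmin * ‖Vi‖ ^ 2 ≤ ‖Vij‖ ^ 2 ∧
        ‖Vij‖ ^ 2 ≤ kmax * ‖Vi‖ ^ 2 ∧
        kmin * ‖Vj‖ ^ 2 ≤ ‖Vji‖ ^ 2 ∧
        ‖Vji‖ ^ 2 ≤ kmax * ‖Vj‖ ^ 2 ∧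
        Vij * starRingEnd ℂ Vj = Vi * starRingEnd ℂ Vji ∧
        (Vi * starRingEnd ℂ Vij).im = 0 ∧
        (Vj * starRingEnd ℂ Vji).im = 0 ∧
        0 ≤ (Vi * starRingEnd ℂ Vij).re ∧
        0 ≤ (Vj * starRingEnd ℂ Vji).re) :=
  prop1_tap_ratio_iff_general Vi Vj Vij Vji hVi hVj kmin kmax hkmin
end

section
/- Suppose W ∈ ℂ^{n×n} is Hermitian positive semidefinite of rank one, with recovered voltage vector V (i.e., W_{ab} = V_a V_b*). Fix indices i, i', j, j' with V_i ≠ 0 and V_j ≠ 0, and suppose W satisfies: W_{i'j} = W_{ij'}, Im(W_{ii'}) = 0, Im(W_{jj'}) = 0, Re(W_{ii'}) ≥ 0, Re(W_{jj'}) ≥ 0, and kmin·W_{ii} ≤ W_{i'i'} ≤ kmax·W_{ii} for reals 0 < kmin ≤ kmax. Then k := W_{i'i'}/W_{ii} is a real number in [kmin, kmax] and V_{i'} = √k·V_i, V_{j'} = √k·V_j. -/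
open Complex ComplexConjugate

/-!
Since `W = V V*`, a real nonnegative entry `W i i' = V i * conj (V i')` forces `V i'` to be a
nonnegative real multiple `c • V i`, and likewise `V j' = d • V j`. The coupling
`W i' j = W i j'` then reads `c • V i conj (V j) = d • V i conj (V j)`, so `c = d`, and
`W i' i' = c ^ 2 * W i i` identifies `k = c ^ 2`; its bounds come from those on `W i' i'`.
-/

namespace Complex

theorem eq_ofReal_mul_of_im_mul_conj_eq_zero {z w : ℂ} (hz : z ≠ 0)
    (h : (z * conj w).im = 0) : w = ((z * conj w).re / normSq z : ℝ) * z := by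
  have hreal : conj z * w = (z * conj w).re :=
    calc conj z * w = conj (z * conj w) := by rw [map_mul, conj_conj]
      _ = z * conj w := conj_eq_iff_im.mpr h
      _ = (z * conj w).re := (conj_eq_iff_re.mp (conj_eq_iff_im.mpr h)).symm
  have hnormSq : (normSq z : ℂ) ≠ 0 := ofReal_ne_zero.mpr (normSq_pos.mpr hz).ne'
  rw [ofReal_div, div_mul_eq_mul_div, eq_div_iff hnormSq, ← hreal, ← mul_conj]
  ring

theorem ofReal_eq_of_mul_conj_eq {z w : ℂ} (hz : z ≠ 0) (hw : w ≠ 0) {c d : ℝ}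
    (h : c * z * conj w = z * conj (d * w)) : c = d := by
  rw [map_mul, conj_ofReal] at h
  have hzw : z * conj w ≠ 0 := mul_ne_zero hz ((map_ne_zero _).mpr hw)
  have hcd : (c : ℂ) * (z * conj w) = d * (z * conj w) := by linear_combination h
  exact_mod_cast mul_right_cancel₀ hzw hcd

end Complex

theorem W_constraints_recover_tap_ratio_general
    (n : ℕ) (W : Matrix (Fin n) (Fin n) ℂ) (V : Fin n → ℂ)
    (hW : ∀ a b, W a b = V a * starRingEnd ℂ (V b))
    (i i' j j' : Fin n) (hVi : V i ≠ 0) (hVj : V j ≠ 0)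
    (kmin kmax : ℝ)
    (hc : W i' j = W i j')
    (him1 : (W i i').im = 0) (him2 : (W j j').im = 0)
    (hre1 : 0 ≤ (W i i').re)
    (hlo : kmin * (W i i).re ≤ (W i' i').re)
    (hhi : (W i' i').re ≤ kmax * (W i i).re) :
    ∃ k : ℝ, W i' i' / W i i = (k : ℂ) ∧ kmin ≤ k ∧ k ≤ kmax ∧
      V i' = (Real.sqrt k : ℂ) * V i ∧ V j' = (Real.sqrt k : ℂ) * V j := by
  have hVi' := eq_ofReal_mul_of_im_mul_conj_eq_zero hVi (hW i i' ▸ him1)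
  have hVj' := eq_ofReal_mul_of_im_mul_conj_eq_zero hVj (hW j j' ▸ him2)
  rw [← hW] at hVi' hVj'
  set c := (W i i').re / normSq (V i)
  have hc_nonneg : 0 ≤ c := div_nonneg hre1 (normSq_nonneg _)
  have hcd := ofReal_eq_of_mul_conj_eq hVi hVj (by rw [← hVi', ← hVj', ← hW, ← hW, hc])
  have hWii : W i i = normSq (V i) := (hW i i).trans (mul_conj _)
  have hWii_pos : 0 < (W i i).re := by simpa [hWii] using hVi
  have hWi'i' : W i' i' = (c ^ 2 : ℝ) * W i i := by
    rw [hW, hW, hVi', map_mul, conj_ofReal]; push_cast; ring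
  have hWi'i'_re : (W i' i').re = c ^ 2 * (W i i).re := by rw [hWi'i', re_ofReal_mul]
  refine ⟨c ^ 2, ?_, ?_, ?_, ?_, ?_⟩
  · rw [hWi'i', mul_div_cancel_right₀ _ (fun h ↦ by simp [h] at hWii_pos)]
  · exact le_of_mul_le_mul_right (hWi'i'_re ▸ hlo) hWii_pos
  · exact le_of_mul_le_mul_right (hWi'i'_re ▸ hhi) hWii_pos
  · rwa [Real.sqrt_sq hc_nonneg]
  · rw [Real.sqrt_sq hc_nonneg, hVj', ← hcd]

theorem W_constraints_recover_tap_ratio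
    (n : ℕ) (W : Matrix (Fin n) (Fin n) ℂ) (V : Fin n → ℂ)
    (hW : ∀ a b, W a b = V a * starRingEnd ℂ (V b))
    (i i' j j' : Fin n) (hVi : V i ≠ 0) (hVj : V j ≠ 0)
    (kmin kmax : ℝ) (hkmin : 0 < kmin) (hkk : kmin ≤ kmax)
    (hc : W i' j = W i j')
    (him1 : (W i i').im = 0) (him2 : (W j j').im = 0)
    (hre1 : 0 ≤ (W i i').re) (hre2 : 0 ≤ (W j j').re)
    (hlo : kmin * (W i i).re ≤ (W i' i').re)
    (hhi : (W i' i').re ≤ kmax * (W i i).re) :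
    ∃ k : ℝ, W i' i' / W i i = (k : ℂ) ∧ kmin ≤ k ∧ k ≤ kmax ∧
      V i' = (Real.sqrt k : ℂ) * V i ∧ V j' = (Real.sqrt k : ℂ) * V j :=
  W_constraints_recover_tap_ratio_general n W V hW i i' j j' hVi hVj kmin kmax hc him1 him2 hre1 hlo
    hhi
end
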